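/- Let G be a countable group generated by a finite symmetric set S. For every k ≥ 1, every s ∈ S and every subset A ⊆ G, μ_{2(k+1)}(As) ≥ (k / ((k+1)·|S|²·ρ(G,S)²)) · μ_{2k}(A). More precisely, μ_{2(k+1)}(As) ≥ ((2k)·|A(2k,S)| / ((2k+2)·|A(2k+2,S)|)) · μ_{2k}(A). -/

import Mathlib

/-!
Inserting the backtrack `s s⁻¹` into a closed walk right after a visit to `A` gives a closed
walk two steps longer that visits `As` one step later, and this insertion is injective; counting
visits gives the second inequality.

For the first, let `N_n(g)` be the number of words of length `n` with product `g`. Since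
`S = S⁻¹`, reversing and inverting words gives `N_n(g⁻¹) = N_n(g)`, so
`|A(a+b,S)| = Σ_g N_a(g) N_b(g)`, and Cauchy–Schwarz makes `m ↦ |A(2m,S)|` log-convex. Its
ratios `|A(2m+2,S)|/|A(2m,S)|` therefore increase, so `|A(2n,S)|` grows at least geometrically
with the ratio at `k`, which is hence at most `|S|²ρ²`.
-/

open Filter
open scoped Classical

noncomputable section

variable {G : Type*} [Group G]

/-- Words of length `n` with letters in `S` whose product lies in the subgroup `H`.
With `H = ⊥` this is the set `A(n,S)` of walks returning to the identity after `n` steps;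
for general `H` it is `A_H(n,S)`. -/
def wordsIn (S : Finset G) (H : Subgroup G) (n : ℕ) : Finset (Fin n → G) :=
  (Fintype.piFinset fun _ => S).filter fun w => (List.ofFn w).prod ∈ H

/-- `specRad S H` is the spectral radius of the Schreier graph of `H\G` w.r.t. `S`:
`lim (|A_H(2n,S)|/|S|^(2n))^(1/(2n))` (stated via `limsup`; the limit exists).
With `H = ⊥` this is the spectral radius `ρ(⟨S⟩,S)` of the Cayley graph of the group
generated by `S`; by convention it equals `1` when `S` is empty (trivial group). -/
def specRad (S : Finset G) (H : Subgroup G) : ℝ :=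
  if S.Nonempty then
    Filter.limsup
      (fun n : ℕ =>
        (((wordsIn S H (2 * n)).card : ℝ) / (S.card : ℝ) ^ (2 * n)) ^ ((1 : ℝ) / (2 * (n : ℝ))))
      Filter.atTop
  else 1

/-- `conjSubgroup g H = H^g = g⁻¹ H g`. -/
def conjSubgroup (g : G) (H : Subgroup G) : Subgroup G :=
  Subgroup.map (MulAut.conj g⁻¹).toMonoidHom H

/-- `prefixProd w i = w(i) = a₁⋯aᵢ`, the position of the walk `w` after `i` steps. -/
def prefixProd {n : ℕ} (w : Fin n → G) (i : ℕ) : G := ((List.ofFn w).take i).prod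

/-- `muMass S n A = μₙ(A) = (1/(n|A(n,S)|)) Σ_{w ∈ A(n,S)} #{1 ≤ i ≤ n : w(i) ∈ A}`,
the expected proportion of time a uniformly random recurrent walk of length `n` spends in `A`. -/
def muMass (S : Finset G) (n : ℕ) (A : Set G) : ℝ :=
  (1 / ((n : ℝ) * ((wordsIn S ⊥ n).card : ℝ))) *
    ∑ w ∈ wordsIn S ⊥ n, (((Finset.Icc 1 n).filter fun i => prefixProd w i ∈ A).card : ℝ)

open Finset Topology

def wordsWithProd (S : Finset G) (n : ℕ) (g : G) : Finset (Fin n → G) :=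
  (Fintype.piFinset fun _ => S).filter fun w => (List.ofFn w).prod = g

lemma mem_wordsWithProd {S : Finset G} {n : ℕ} {g : G} {w : Fin n → G} :
    w ∈ wordsWithProd S n g ↔ (∀ i, w i ∈ S) ∧ (List.ofFn w).prod = g := by
  simp [wordsWithProd]

lemma wordsIn_bot_eq_wordsWithProd (S : Finset G) (n : ℕ) :
    wordsIn S ⊥ n = wordsWithProd S n 1 := by
  ext w
  simp [wordsIn, wordsWithProd, Subgroup.mem_bot]

lemma card_wordsIn_le (S : Finset G) (H : Subgroup G) (n : ℕ) :
    #(wordsIn S H n) ≤ #S ^ n :=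
  (card_filter_le _ _).trans (by simp)

lemma List.ofFn_comp_rev {α : Type*} {n : ℕ} (f : Fin n → α) :
    List.ofFn (fun i => f i.rev) = (List.ofFn f).reverse := by
  refine List.ext_getElem (by simp) fun i _ _ => ?_
  simp only [List.getElem_ofFn, List.getElem_reverse, List.length_ofFn, Fin.rev]
  congr 2
  omega

def reverseInv {n : ℕ} (w : Fin n → G) (i : Fin n) : G := (w i.rev)⁻¹

lemma reverseInv_involutive (n : ℕ) : Function.Involutive (reverseInv (G := G) (n := n)) :=
  fun w => funext fun i => by simp [reverseInv]

lemma prod_ofFn_reverseInv {n : ℕ} (w : Fin n → G) :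
    (List.ofFn (reverseInv w)).prod = (List.ofFn w).prod⁻¹ := by
  rw [List.prod_inv_reverse, List.map_ofFn, ← List.ofFn_comp_rev]
  rfl

lemma reverseInv_mem_wordsWithProd {S : Finset G} (hsymm : ∀ s ∈ S, s⁻¹ ∈ S) {n : ℕ} {g : G}
    {w : Fin n → G} (hw : w ∈ wordsWithProd S n g) : reverseInv w ∈ wordsWithProd S n g⁻¹ := by
  rw [mem_wordsWithProd] at hw ⊢
  exact ⟨fun i => hsymm _ (hw.1 _), by rw [prod_ofFn_reverseInv, hw.2]⟩

lemma card_wordsWithProd_inv {S : Finset G} (hsymm : ∀ s ∈ S, s⁻¹ ∈ S) (n : ℕ) (g : G) :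
    #(wordsWithProd S n g⁻¹) = #(wordsWithProd S n g) :=
  card_nbij' reverseInv reverseInv
    (fun w hw => by simpa using reverseInv_mem_wordsWithProd hsymm hw)
    (fun w hw => reverseInv_mem_wordsWithProd hsymm hw)
    (fun w _ => reverseInv_involutive n w) (fun w _ => reverseInv_involutive n w)

lemma card_wordsWithProd_add (S : Finset G) (a b : ℕ) (h : G) {T : Finset G}
    (hT : ∀ u ∈ Fintype.piFinset (fun _ : Fin a => S), (List.ofFn u).prod ∈ T) :
    #(wordsWithProd S (a + b) h) =
      ∑ g ∈ T, #(wordsWithProd S a g) * #(wordsWithProd S b (g⁻¹ * h)) := by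
  have hsplit : #(((Fintype.piFinset fun _ => S) ×ˢ (Fintype.piFinset fun _ => S)).filter
      fun p : (Fin a → G) × (Fin b → G) => (List.ofFn p.1).prod * (List.ofFn p.2).prod = h) =
      #(wordsWithProd S (a + b) h) :=
    card_equiv (Fin.appendEquiv a b) fun p => by
      change _ ↔ Fin.append p.1 p.2 ∈ _
      simp [mem_wordsWithProd, List.ofFn_fin_append, Fin.forall_fin_add, and_assoc]
  rw [← hsplit, card_eq_sum_card_fiberwise (f := fun p => (List.ofFn p.1).prod)
    (fun p hp => hT _ (mem_product.1 (mem_filter.1 hp).1).1)]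
  refine sum_congr rfl fun g _ => ?_
  rw [← card_product]
  congr 1
  ext p
  simp only [mem_filter, mem_product, mem_wordsWithProd, Fintype.mem_piFinset,
    eq_inv_mul_iff_mul_eq]
  constructor
  · rintro ⟨⟨⟨hu, hv⟩, hprod⟩, rfl⟩
    exact ⟨⟨hu, rfl⟩, hv, hprod⟩
  · rintro ⟨⟨hu, rfl⟩, hv, hprod⟩
    exact ⟨⟨⟨hu, hv⟩, hprod⟩, rfl⟩

lemma card_wordsIn_bot_add {S : Finset G} (hsymm : ∀ s ∈ S, s⁻¹ ∈ S) (a b : ℕ) {T : Finset G}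
    (hT : ∀ u ∈ Fintype.piFinset (fun _ : Fin a => S), (List.ofFn u).prod ∈ T) :
    #(wordsIn S ⊥ (a + b)) = ∑ g ∈ T, #(wordsWithProd S a g) * #(wordsWithProd S b g) := by
  simp only [wordsIn_bot_eq_wordsWithProd, card_wordsWithProd_add S a b 1 hT, mul_one,
    card_wordsWithProd_inv hsymm]

lemma card_wordsIn_bot_two_mul_pos {S : Finset G} (hsymm : ∀ s ∈ S, s⁻¹ ∈ S) (hS : S.Nonempty)
    (m : ℕ) : 0 < #(wordsIn S ⊥ (2 * m)) := by
  let P (u : Fin m → G) : G := (List.ofFn u).prod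
  obtain ⟨u, hu⟩ : (Fintype.piFinset fun _ : Fin m => S).Nonempty :=
    Fintype.piFinset_nonempty.2 fun _ => hS
  have hpos : 0 < #(wordsWithProd S m (P u)) :=
    card_pos.2 ⟨u, mem_wordsWithProd.2 ⟨Fintype.mem_piFinset.1 hu, rfl⟩⟩
  rw [two_mul, card_wordsIn_bot_add hsymm m m fun v hv => mem_image_of_mem P hv]
  exact sum_pos' (fun _ _ => Nat.zero_le _) ⟨P u, mem_image_of_mem P hu, Nat.mul_pos hpos hpos⟩

lemma sq_card_wordsIn_bot_two_mul_succ_le {S : Finset G} (hsymm : ∀ s ∈ S, s⁻¹ ∈ S) (m : ℕ) :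
    #(wordsIn S ⊥ (2 * (m + 1))) ^ 2 ≤ #(wordsIn S ⊥ (2 * m)) * #(wordsIn S ⊥ (2 * (m + 2))) := by
  let P {n : ℕ} (u : Fin n → G) : G := (List.ofFn u).prod
  let T := (Fintype.piFinset fun _ : Fin m => S).image P ∪
    (Fintype.piFinset fun _ : Fin (m + 2) => S).image P
  have hT₁ : ∀ u ∈ Fintype.piFinset (fun _ : Fin m => S), P u ∈ T :=
    fun u hu => mem_union_left _ (mem_image_of_mem P hu)
  have hT₂ : ∀ u ∈ Fintype.piFinset (fun _ : Fin (m + 2) => S), P u ∈ T :=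
    fun u hu => mem_union_right _ (mem_image_of_mem P hu)
  rw [show 2 * (m + 1) = m + (m + 2) by ring, show 2 * m = m + m by ring,
    show 2 * (m + 2) = (m + 2) + (m + 2) by ring, card_wordsIn_bot_add hsymm _ _ hT₁,
    card_wordsIn_bot_add hsymm _ _ hT₁, card_wordsIn_bot_add hsymm _ _ hT₂]
  simpa only [sq] using sum_mul_sq_le_sq_mul_sq T _ _

lemma sum_card_filter_eq_card_filter_product {α β : Type*} (s : Finset α) (t : Finset β)
    (p : α → β → Prop) :
    ∑ a ∈ s, #{b ∈ t | p a b} = #{x ∈ s ×ˢ t | p x.1 x.2} := by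
  simp only [card_filter, sum_product]

def insertBacktrack (s : G) (l : List G) (i : ℕ) : List G := l.take i ++ s :: s⁻¹ :: l.drop i

section insertBacktrack

variable (s : G) (l : List G) {i : ℕ}

lemma length_insertBacktrack : (insertBacktrack s l i).length = l.length + 2 := by
  simp only [insertBacktrack, List.length_append, List.length_take, List.length_cons,
    List.length_drop]
  omega

lemma prod_insertBacktrack : (insertBacktrack s l i).prod = l.prod := by
  rw [insertBacktrack, List.prod_append, List.prod_cons, List.prod_cons, mul_inv_cancel_left,
    List.prod_take_mul_prod_drop]

lemma take_succ_insertBacktrack (h : i ≤ l.length) :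
    (insertBacktrack s l i).take (i + 1) = l.take i ++ [s] := by
  simp [insertBacktrack, List.take_append, Nat.min_eq_left h]

lemma take_append_drop_insertBacktrack (h : i ≤ l.length) :
    (insertBacktrack s l i).take i ++ (insertBacktrack s l i).drop (i + 2) = l := by
  have hnil : (l.take i).drop (i + 2) = [] := List.drop_eq_nil_of_le (by simp)
  simp [insertBacktrack, List.drop_append, Nat.min_eq_left h, hnil]

end insertBacktrack

def insertBacktrackWord (s : G) {n : ℕ} (w : Fin n → G) (i : ℕ) (j : Fin (n + 2)) : G :=
  (insertBacktrack s (List.ofFn w) i)[(j : ℕ)]'(by simp [length_insertBacktrack])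

section insertBacktrackWord

variable (s : G) {n : ℕ} (w : Fin n → G) {i : ℕ}

lemma ofFn_insertBacktrackWord :
    List.ofFn (insertBacktrackWord s w i) = insertBacktrack s (List.ofFn w) i :=
  List.ext_getElem (by simp [length_insertBacktrack]) fun _ _ _ => List.getElem_ofFn ..

lemma prefixProd_insertBacktrackWord (h : i ≤ n) :
    prefixProd (insertBacktrackWord s w i) (i + 1) = prefixProd w i * s := by
  rw [prefixProd, prefixProd, ofFn_insertBacktrackWord,
    take_succ_insertBacktrack _ _ (by simpa using h), List.prod_append, List.prod_singleton]

lemma insertBacktrackWord_injective (h : i ≤ n) :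
    Function.Injective fun w : Fin n → G => insertBacktrackWord s w i := by
  intro w w' hw
  apply List.ofFn_injective
  rw [← take_append_drop_insertBacktrack s (List.ofFn w) (by simpa using h),
    ← take_append_drop_insertBacktrack s (List.ofFn w') (by simpa using h),
    ← ofFn_insertBacktrackWord, ← ofFn_insertBacktrackWord]
  simp only at hw
  rw [hw]

lemma insertBacktrackWord_mem_wordsIn {S : Finset G} (hs : s ∈ S) (hs' : s⁻¹ ∈ S)
    (hw : w ∈ wordsIn S ⊥ n) : insertBacktrackWord s w i ∈ wordsIn S ⊥ (n + 2) := by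
  rw [wordsIn_bot_eq_wordsWithProd, mem_wordsWithProd] at hw ⊢
  refine ⟨List.forall_mem_ofFn_iff.1 ?_, ?_⟩
  · have hl := List.forall_mem_ofFn_iff.2 hw.1
    rw [ofFn_insertBacktrackWord]
    simp only [insertBacktrack, List.mem_append, List.mem_cons]
    rintro x ((hx | rfl | rfl | hx))
    exacts [hl x (List.mem_of_mem_take hx), hs, hs', hl x (List.mem_of_mem_drop hx)]
  · rw [ofFn_insertBacktrackWord, prod_insertBacktrack, hw.2]

end insertBacktrackWord

lemma sum_card_visits_le {S : Finset G} {s : G} (hs : s ∈ S) (hs' : s⁻¹ ∈ S) (n : ℕ)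
    (A : Set G) :
    ∑ w ∈ wordsIn S ⊥ n, #{i ∈ Icc 1 n | prefixProd w i ∈ A} ≤
      ∑ w ∈ wordsIn S ⊥ (n + 2), #{i ∈ Icc 1 (n + 2) | prefixProd w i ∈ (· * s) '' A} := by
  rw [sum_card_filter_eq_card_filter_product, sum_card_filter_eq_card_filter_product]
  refine card_le_card_of_injOn (fun p => (insertBacktrackWord s p.1 p.2, p.2 + 1)) ?_ ?_
  · rintro ⟨w, i⟩ hp
    simp only [coe_filter, mem_product, mem_Icc] at hp ⊢
    obtain ⟨⟨hw, hi₁, hin⟩, hA⟩ := hp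
    refine ⟨⟨insertBacktrackWord_mem_wordsIn s w hs hs' hw, by omega, by omega⟩, ?_⟩
    rw [prefixProd_insertBacktrackWord s w hin]
    exact Set.mem_image_of_mem _ hA
  · rintro ⟨w, i⟩ hp ⟨w', i'⟩ _ heq
    simp only [coe_filter, mem_product, mem_Icc, Prod.mk.injEq,
      add_left_inj] at hp heq
    obtain ⟨hw, rfl⟩ := heq
    rw [insertBacktrackWord_injective s hp.1.2.2 hw]

lemma muMass_nonneg (S : Finset G) (n : ℕ) (A : Set G) : 0 ≤ muMass S n A := by
  unfold muMass
  positivity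

lemma div_mul_one_div_mul_le {a b x y : ℝ} (hb : 0 ≤ b) (hx : 0 ≤ x) (hxy : x ≤ y) :
    a / b * (1 / a * x) ≤ 1 / b * y := by
  rcases eq_or_ne a 0 with rfl | ha
  · simpa using mul_nonneg (one_div_nonneg.2 hb) (hx.trans hxy)
  · calc a / b * (1 / a * x) = 1 / b * x := by field_simp
      _ ≤ 1 / b * y := by gcongr

lemma muMass_image_mul_right_ge {S : Finset G} {s : G} (hs : s ∈ S) (hs' : s⁻¹ ∈ S) (n : ℕ)
    (A : Set G) :
    (n * #(wordsIn S ⊥ n) / ((n + 2) * #(wordsIn S ⊥ (n + 2)))) * muMass S n A ≤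
      muMass S (n + 2) ((· * s) '' A) := by
  have hvisits : ∑ w ∈ wordsIn S ⊥ n, (#{i ∈ Icc 1 n | prefixProd w i ∈ A} : ℝ) ≤
      ∑ w ∈ wordsIn S ⊥ (n + 2), (#{i ∈ Icc 1 (n + 2) | prefixProd w i ∈ (· * s) '' A} : ℝ) := by
    exact_mod_cast sum_card_visits_le hs hs' n A
  unfold muMass
  push_cast
  exact div_mul_one_div_mul_le (by positivity) (sum_nonneg fun _ _ => by positivity) hvisits

lemma mul_ratio_pow_le_of_sq_le {a : ℕ → ℝ} (hpos : ∀ n, 0 < a n)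
    (hconv : ∀ n, a (n + 1) ^ 2 ≤ a n * a (n + 2)) (k j : ℕ) :
    a k * (a (k + 1) / a k) ^ j ≤ a (k + j) := by
  have hmono : Monotone fun n => a (n + 1) / a n := by
    refine monotone_nat_of_le_succ fun n => ?_
    rw [div_le_div_iff₀ (hpos n) (hpos (n + 1)), ← sq]
    linarith [hconv n]
  induction j with
  | zero => simp
  | succ j ih =>
    calc a k * (a (k + 1) / a k) ^ (j + 1)
        = a k * (a (k + 1) / a k) ^ j * (a (k + 1) / a k) := by ring
      _ ≤ a (k + j) * (a (k + j + 1) / a (k + j)) :=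
          mul_le_mul ih (hmono (Nat.le_add_right k j)) (div_pos (hpos _) (hpos _)).le
            (hpos _).le
      _ = a (k + (j + 1)) := by
          rw [mul_div_cancel₀ _ (hpos _).ne']
          rfl

lemma sqrt_le_limsup_rpow {x : ℕ → ℝ} {C r : ℝ} (hC : 0 < C) (hr : 0 ≤ r)
    (hx₀ : ∀ n, 0 ≤ x n) (hx₁ : ∀ n, x n ≤ 1) (hlow : ∀ᶠ n in atTop, C * r ^ n ≤ x n) :
    √r ≤ limsup (fun n : ℕ => x n ^ ((1 : ℝ) / (2 * n))) atTop := by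
  have hexp : Tendsto (fun n : ℕ => (1 : ℝ) / (2 * n)) atTop (𝓝 0) :=
    tendsto_const_nhds.div_atTop (tendsto_natCast_atTop_atTop.const_mul_atTop two_pos)
  have hlim : Tendsto (fun n : ℕ => C ^ ((1 : ℝ) / (2 * n)) * √r) atTop (𝓝 (√r)) := by
    simpa using (tendsto_const_nhds.rpow hexp (Or.inl hC.ne')).mul_const √r
  refine hlim.limsup_eq.symm.trans_le (limsup_le_limsup ?_ ?_ ?_)
  · filter_upwards [hlow, eventually_ge_atTop 1] with n hn hn₁
    have hn₀ : (n : ℝ) ≠ 0 := by positivity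
    calc C ^ ((1 : ℝ) / (2 * n)) * √r = (C * r ^ n) ^ ((1 : ℝ) / (2 * n)) := by
          rw [Real.mul_rpow hC.le (by positivity), ← Real.rpow_natCast_mul hr, Real.sqrt_eq_rpow]
          congr 2
          field_simp
      _ ≤ x n ^ ((1 : ℝ) / (2 * n)) := by gcongr
  · exact isCoboundedUnder_le_of_le atTop fun n => by positivity
  · exact isBoundedUnder_of ⟨1, fun n => Real.rpow_le_one (hx₀ n) (hx₁ n) (by positivity)⟩

lemma card_wordsIn_bot_two_mul_succ_le {S : Finset G} (hsymm : ∀ s ∈ S, s⁻¹ ∈ S)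
    (hS : S.Nonempty) (k : ℕ) :
    (#(wordsIn S ⊥ (2 * (k + 1))) : ℝ) ≤ specRad S ⊥ ^ 2 * #S ^ 2 * #(wordsIn S ⊥ (2 * k)) := by
  set a : ℕ → ℝ := fun m => #(wordsIn S ⊥ (2 * m)) with ha
  have hq : (0 : ℝ) < #S := by exact_mod_cast hS.card_pos
  have hpos : ∀ m, 0 < a m := fun m => by
    simp only [ha]
    exact_mod_cast card_wordsIn_bot_two_mul_pos hsymm hS m
  set r := a (k + 1) / a k
  have hr : 0 < r := div_pos (hpos _) (hpos _)
  have hgrowth := mul_ratio_pow_le_of_sq_le hpos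
    (fun m => by simp only [ha]; exact_mod_cast sq_card_wordsIn_bot_two_mul_succ_le hsymm m) k
  have hroot : √(r / #S ^ 2) ≤ specRad S ⊥ := by
    rw [specRad, if_pos hS]
    refine sqrt_le_limsup_rpow (C := a k / r ^ k) (div_pos (hpos k) (pow_pos hr k))
      (by positivity) (fun n => by positivity)
      (fun n => div_le_one_of_le₀ (by exact_mod_cast card_wordsIn_le S ⊥ (2 * n)) (by positivity))
      ?_
    filter_upwards [eventually_ge_atTop k] with n hn
    obtain ⟨j, rfl⟩ := Nat.exists_eq_add_of_le hn
    calc a k / r ^ k * (r / #S ^ 2) ^ (k + j) = a k * r ^ j / (#S : ℝ) ^ (2 * (k + j)) := by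
          rw [div_pow r, ← pow_mul, pow_add r]
          field_simp
      _ ≤ a (k + j) / (#S : ℝ) ^ (2 * (k + j)) := by gcongr; exact hgrowth j
  have hρ := (Real.sqrt_le_left ((Real.sqrt_nonneg _).trans hroot)).1 hroot
  rw [div_le_iff₀ (by positivity)] at hρ
  calc a (k + 1) = r * a k := (div_mul_cancel₀ _ (hpos k).ne').symm
    _ ≤ specRad S ⊥ ^ 2 * #S ^ 2 * a k := by gcongr

theorem mu_quasi_invariant_step_general
    (S : Finset G)
    (hsymm : ∀ s ∈ S, s⁻¹ ∈ S)
    (k : ℕ) (s : G) (hs : s ∈ S) (A : Set G) :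
    muMass S (2 * (k + 1)) ((fun a => a * s) '' A) ≥
        ((k : ℝ) / (((k : ℝ) + 1) * (S.card : ℝ) ^ 2 * specRad S ⊥ ^ 2)) * muMass S (2 * k) A
      ∧
    muMass S (2 * (k + 1)) ((fun a => a * s) '' A) ≥
        ((2 * (k : ℝ)) * ((wordsIn S ⊥ (2 * k)).card : ℝ) /
            ((2 * (k : ℝ) + 2) * ((wordsIn S ⊥ (2 * k + 2)).card : ℝ))) * muMass S (2 * k) A := by
  have hS : S.Nonempty := ⟨s, hs⟩
  have hstep := muMass_image_mul_right_ge hs (hsymm s hs) (2 * k) A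
  have hcard := card_wordsIn_bot_two_mul_succ_le hsymm hS k
  have hc₁ : (0 : ℝ) < #(wordsIn S ⊥ (2 * k)) := by
    exact_mod_cast card_wordsIn_bot_two_mul_pos hsymm hS k
  have hc₂ : (0 : ℝ) < #(wordsIn S ⊥ (2 * (k + 1))) := by
    exact_mod_cast card_wordsIn_bot_two_mul_pos hsymm hS (k + 1)
  rw [mul_add, mul_one] at hc₂ hcard ⊢
  push_cast at hstep
  refine ⟨le_trans (mul_le_mul_of_nonneg_right ?_ (muMass_nonneg S _ A)) hstep, hstep⟩
  set c₁ : ℝ := (#(wordsIn S ⊥ (2 * k)) : ℝ)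
  set c₂ : ℝ := (#(wordsIn S ⊥ (2 * k + 2)) : ℝ)
  calc (k : ℝ) / ((k + 1) * #S ^ 2 * specRad S ⊥ ^ 2)
      = k * c₁ / ((k + 1) * #S ^ 2 * specRad S ⊥ ^ 2 * c₁) :=
        (mul_div_mul_right _ _ hc₁.ne').symm
    _ ≤ k * c₁ / ((k + 1) * c₂) := by
        refine div_le_div_of_nonneg_left (by positivity) (by positivity) ?_
        calc (k + 1) * c₂ ≤ (k + 1) * (specRad S ⊥ ^ 2 * #S ^ 2 * c₁) := by gcongr
          _ = (k + 1) * #S ^ 2 * specRad S ⊥ ^ 2 * c₁ := by ring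
    _ = 2 * k * c₁ / ((2 * k + 2) * c₂) := by
        field_simp

/-- **Lemma.** For every `k ≥ 1`, `s ∈ S` and `A ⊆ G`:
`μ_{2(k+1)}(As) ≥ (k/((k+1)|S|²ρ(G,S)²))·μ_{2k}(A)`, and more precisely
`μ_{2(k+1)}(As) ≥ ((2k)|A(2k,S)|/((2k+2)|A(2k+2,S)|))·μ_{2k}(A)`. -/
theorem mu_quasi_invariant_step [Countable G]
    (S : Finset G) (hgen : Subgroup.closure (S : Set G) = ⊤)
    (hsymm : ∀ s ∈ S, s⁻¹ ∈ S)
    (k : ℕ) (hk : 1 ≤ k) (s : G) (hs : s ∈ S) (A : Set G) :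
    muMass S (2 * (k + 1)) ((fun a => a * s) '' A) ≥
        ((k : ℝ) / (((k : ℝ) + 1) * (S.card : ℝ) ^ 2 * specRad S ⊥ ^ 2)) * muMass S (2 * k) A
      ∧
    muMass S (2 * (k + 1)) ((fun a => a * s) '' A) ≥
        ((2 * (k : ℝ)) * ((wordsIn S ⊥ (2 * k)).card : ℝ) /
            ((2 * (k : ℝ) + 2) * ((wordsIn S ⊥ (2 * k + 2)).card : ℝ))) * muMass S (2 * k) A :=
  mu_quasi_invariant_step_general S hsymm k s hs A

end
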